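/- arXiv:2207.12678 — 3 statements merged into one kernel-verified Lean document; each statement's English description precedes it below -/
import Mathlib

section
/- Consider the two-layer linear network f(x) = (1/√m) Aᵀ W x with A ∈ ℝᵐ, W ∈ ℝ^{m×d}, data matrix X ∈ ℝ^{d×n}, residual D = (1/√m) XᵀWᵀA − Y, and gradient descent updates A⁺ = A − (2η/(n√m)) W X D and W⁺ = W − (2η/(n√m)) A Dᵀ Xᵀ. Then the new residual D⁺ = (1/√m) Xᵀ (W⁺)ᵀ A⁺ − Y satisfies D⁺ = (I − ηM)D + (4η²/(n²m)) (Fᵀ D) XᵀX D, where M = (2/(mn))(‖A‖² XᵀX + Xᵀ Wᵀ W X) and F = D + Y. -/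
/-!
Both updates are of order `c = 2η/(n√m)`, so the new output `Xᵀ W⁺ᵀ A⁺` is a quadratic
polynomial in `c`. Its constant term is the old output `√m F`, its linear term is
`-c (‖A‖² XᵀX + XᵀWᵀWX) D`, and its quadratic term comes from the two rank-one corrections
meeting: it is `c² (Aᵀ W X D) XᵀX D`, where `Aᵀ W X D = (XᵀWᵀA)ᵀ D = √m Fᵀ D`.
-/

open Matrix

section GradientStep

variable {R ι κ ν : Type*} [CommRing R] [Fintype ι] [Fintype κ] [Fintype ν]

theorem linear_net_output_after_step (A : ι → R) (W : Matrix ι κ R)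
    (X : Matrix κ ν R) (D : ν → R) (c : R) :
    (Xᵀ * (W - c • vecMulVec A (X *ᵥ D))ᵀ) *ᵥ (A - c • (W * X) *ᵥ D)
      = (Xᵀ * Wᵀ) *ᵥ A - c • ((A ⬝ᵥ A) • (Xᵀ * X) + Xᵀ * Wᵀ * W * X) *ᵥ D
        + (c ^ 2 * ((Xᵀ * Wᵀ) *ᵥ A ⬝ᵥ D)) • (Xᵀ * X) *ᵥ D := by
  have hcross : ∀ v : ι → R, (Xᵀ * vecMulVec (X *ᵥ D) A) *ᵥ v = (A ⬝ᵥ v) • (Xᵀ * X) *ᵥ D := by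
    intro v
    rw [← mulVec_mulVec, vecMulVec_mulVec, op_smul_eq_smul, mulVec_smul, mulVec_mulVec]
  have hAWXD : A ⬝ᵥ (W * X) *ᵥ D = (Xᵀ * Wᵀ) *ᵥ A ⬝ᵥ D := by
    rw [dotProduct_mulVec, ← mulVec_transpose, transpose_mul]
  simp only [transpose_sub, transpose_smul, transpose_vecMulVec, Matrix.mul_sub, Matrix.mul_smul,
    sub_mulVec, mulVec_sub, smul_mulVec, mulVec_smul, hcross, hAWXD, add_mulVec]
  rw [mulVec_mulVec, ← Matrix.mul_assoc]
  module

end GradientStep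

theorem residual_update_two_layer_linear_general (m d n : ℕ) (hm : 0 < m)
    (η : ℝ)
    (A : Fin m → ℝ) (W : Matrix (Fin m) (Fin d) ℝ) (X : Matrix (Fin d) (Fin n) ℝ)
    (Y D F : Fin n → ℝ)
    (hD : D = (1 / Real.sqrt m) • (Xᵀ * Wᵀ).mulVec A - Y)
    (hF : F = D + Y)
    (Aplus : Fin m → ℝ) (Wplus : Matrix (Fin m) (Fin d) ℝ)
    (hA : Aplus = A - (2 * η / ((n : ℝ) * Real.sqrt m)) • (W * X).mulVec D)
    (hW : Wplus = W - (2 * η / ((n : ℝ) * Real.sqrt m)) • Matrix.vecMulVec A (X.mulVec D))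
    (Dplus : Fin n → ℝ)
    (hDp : Dplus = (1 / Real.sqrt m) • (Xᵀ * Wplusᵀ).mulVec Aplus - Y)
    (M : Matrix (Fin n) (Fin n) ℝ)
    (hM : M = (2 / ((m : ℝ) * n)) • ((A ⬝ᵥ A) • (Xᵀ * X) + Xᵀ * Wᵀ * W * X)) :
    Dplus = (1 - η • M).mulVec D
      + ((4 * η ^ 2 / ((n : ℝ) ^ 2 * m)) * (F ⬝ᵥ D)) • (Xᵀ * X).mulVec D := by
  set s := Real.sqrt m
  have hs : s ≠ 0 := by positivity
  have hsq : (m : ℝ) = s ^ 2 := (Real.sq_sqrt m.cast_nonneg).symm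
  have hout : (Xᵀ * Wᵀ) *ᵥ A = s • F := by
    rw [hF, hD, sub_add_cancel, smul_smul, mul_one_div_cancel hs, one_smul]
  rw [hDp, hA, hW, linear_net_output_after_step, hout, hM, sub_mulVec, one_mulVec, smul_mulVec,
    smul_mulVec, smul_dotProduct, smul_eq_mul, hF, hsq]
  match_scalars <;> field_simp <;> ring

/-- Exact one-step gradient-descent dynamics of the residual vector in a two-layer
linear network: `D⁺ = (I − ηM)D + (4η²/(n²m)) (Fᵀ D) XᵀX D` with
`M = (2/(mn))(‖A‖² XᵀX + XᵀWᵀWX)` and `F = D + Y`. -/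
theorem residual_update_two_layer_linear (m d n : ℕ) (hm : 0 < m) (hn : 0 < n)
    (η : ℝ) (hη : 0 < η)
    (A : Fin m → ℝ) (W : Matrix (Fin m) (Fin d) ℝ) (X : Matrix (Fin d) (Fin n) ℝ)
    (Y D F : Fin n → ℝ)
    (hD : D = (1 / Real.sqrt m) • (Xᵀ * Wᵀ).mulVec A - Y)
    (hF : F = D + Y)
    (Aplus : Fin m → ℝ) (Wplus : Matrix (Fin m) (Fin d) ℝ)
    (hA : Aplus = A - (2 * η / ((n : ℝ) * Real.sqrt m)) • (W * X).mulVec D)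
    (hW : Wplus = W - (2 * η / ((n : ℝ) * Real.sqrt m)) • Matrix.vecMulVec A (X.mulVec D))
    (Dplus : Fin n → ℝ)
    (hDp : Dplus = (1 / Real.sqrt m) • (Xᵀ * Wplusᵀ).mulVec Aplus - Y)
    (M : Matrix (Fin n) (Fin n) ℝ)
    (hM : M = (2 / ((m : ℝ) * n)) • ((A ⬝ᵥ A) • (Xᵀ * X) + Xᵀ * Wᵀ * W * X)) :
    Dplus = (1 - η • M).mulVec D
      + ((4 * η ^ 2 / ((n : ℝ) ^ 2 * m)) * (F ⬝ᵥ D)) • (Xᵀ * X).mulVec D :=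
  residual_update_two_layer_linear_general m d n hm η A W X Y D F hD hF Aplus Wplus hA hW Dplus hDp
    M hM
end

section
/- Let XᵀX ∈ ℝ^{n×n} be symmetric PSD with top eigenvalue λ₁ > 0, unit top eigenvector v₁, and all other eigenvalues at most λ₁/2. Let M = γ XᵀX + Γ where γ ≥ γ₀ > 0 and ‖Γ‖ ≤ ε (operator norm). Let u be a unit top eigenvector of M with eigenvalue Λ = λ_max(M). Then, writing cos θ = ⟨v₁, u⟩, one has sin²θ ≤ 4ε/(γ₀ λ₁), and moreover Λ ≥ v₁ᵀ M v₁ ≥ Λ − 2ε. -/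
/-!
Write `u = c v₁ + w` with `w ⟂ v₁`, so `c = cos θ` and `‖w‖² = sin²θ`. Since `v₁` is an eigenvector
of the symmetric `S`, the cross terms vanish and the spectral gap gives
`uᵀ S u ≤ λ₁ (1 - sin²θ / 2)`. Hence `Λ = uᵀ M u ≤ γ λ₁ (1 - sin²θ / 2) + ε`, while
`v₁ᵀ M v₁ ≥ γ λ₁ - ε`. As `v₁ᵀ M v₁ ≤ Λ`, the gap `γ λ₁ sin²θ / 2` is squeezed below `2ε`,
which yields both the angle bound and `Λ - v₁ᵀ M v₁ ≤ 2ε`.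
-/

open RealInnerProductSpace

variable {E : Type*} [NormedAddCommGroup E] [InnerProductSpace ℝ E]

lemma abs_inner_map_self_le {T : E →ₗ[ℝ] E} {ε : ℝ} (hT : ∀ w, ‖T w‖ ≤ ε * ‖w‖) (x : E) :
    |⟪x, T x⟫| ≤ ε * ‖x‖ ^ 2 :=
  calc |⟪x, T x⟫| ≤ ‖x‖ * ‖T x‖ := abs_real_inner_le_norm _ _
    _ ≤ ‖x‖ * (ε * ‖x‖) := by gcongr; exact hT x
    _ = ε * ‖x‖ ^ 2 := by ring

variable {T Γ : E →ₗ[ℝ] E} {v : E} {lam γ ε : ℝ}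

lemma le_inner_smul_add_map_self_of_eigenvector (hv : ‖v‖ = 1) (hTv : T v = lam • v)
    (hΓ : ∀ w, ‖Γ w‖ ≤ ε * ‖w‖) : γ * lam - ε ≤ ⟪v, (γ • T + Γ) v⟫ := by
  have hΓv := (abs_le.mp (abs_inner_map_self_le hΓ v)).1
  rw [hv] at hΓv
  rw [LinearMap.add_apply, LinearMap.smul_apply, inner_add_right, real_inner_smul_right, hTv,
    real_inner_smul_right, real_inner_self_eq_norm_sq, hv]
  linarith

namespace LinearMap.IsSymmetric

lemma inner_map_self_smul_add (hT : T.IsSymmetric) (hTv : T v = lam • v) {w : E}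
    (hvw : ⟪v, w⟫ = 0) (c : ℝ) :
    ⟪c • v + w, T (c • v + w)⟫ = c ^ 2 * lam * ‖v‖ ^ 2 + ⟪w, T w⟫ := by
  have hwv : ⟪w, v⟫ = 0 := by rw [real_inner_comm, hvw]
  have hvTw : ⟪v, T w⟫ = 0 := by rw [← hT, hTv, real_inner_smul_left, hvw, mul_zero]
  simp only [map_add, map_smul, inner_add_left, inner_add_right, real_inner_smul_left,
    real_inner_smul_right, hwv, hvTw, hTv, real_inner_self_eq_norm_sq]
  ring

lemma inner_map_self_le_of_spectral_gap (hT : T.IsSymmetric) (hv : ‖v‖ = 1)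
    (hTv : T v = lam • v) (hgap : ∀ w, ⟪v, w⟫ = 0 → ⟪w, T w⟫ ≤ lam / 2 * ‖w‖ ^ 2) (u : E) :
    ⟪u, T u⟫ ≤ lam * ⟪v, u⟫ ^ 2 + lam / 2 * (‖u‖ ^ 2 - ⟪v, u⟫ ^ 2) := by
  set c := ⟪v, u⟫
  set w := u - c • v
  have hu : u = c • v + w := by simp [w]
  have hvw : ⟪v, w⟫ = 0 := by
    simp only [w, c, inner_sub_right, real_inner_smul_right, real_inner_self_eq_norm_sq, hv]
    ring
  have hpyth : ‖u‖ ^ 2 = c ^ 2 + ‖w‖ ^ 2 := by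
    rw [hu, norm_add_sq_real, real_inner_smul_left, hvw, norm_smul, hv, Real.norm_eq_abs,
      mul_one, sq_abs]
    ring
  rw [hu, hT.inner_map_self_smul_add hTv hvw, hv, ← hu, hpyth]
  linarith [hgap w hvw]

lemma inner_smul_add_map_self_le (hT : T.IsSymmetric) (hv : ‖v‖ = 1) (hTv : T v = lam • v)
    (hgap : ∀ w, ⟪v, w⟫ = 0 → ⟪w, T w⟫ ≤ lam / 2 * ‖w‖ ^ 2) (hγ : 0 ≤ γ)
    (hΓ : ∀ w, ‖Γ w‖ ≤ ε * ‖w‖) {u : E} (hu : ‖u‖ = 1) :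
    ⟪u, (γ • T + Γ) u⟫ ≤ γ * lam * (1 - (1 - ⟪v, u⟫ ^ 2) / 2) + ε := by
  have hTu := hT.inner_map_self_le_of_spectral_gap hv hTv hgap u
  have hΓu := (abs_le.mp (abs_inner_map_self_le hΓ u)).2
  rw [hu] at hTu hΓu
  rw [add_apply, smul_apply, inner_add_right, real_inner_smul_right]
  linarith [mul_le_mul_of_nonneg_left hTu hγ]

end LinearMap.IsSymmetric

/-- `v₁`-similarity: if `M = γ S + Γ` with `S` symmetric PSD having top eigenvalue
`lam1 > 0` (unit eigenvector `v₁`) and all other eigenvalues at most `lam1/2`,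
`γ ≥ γ₀ > 0`, `‖Γ‖ ≤ ε`, and `u` is a unit top eigenvector of `M` with top
eigenvalue `Λ`, then `sin²θ ≤ 4ε/(γ₀·lam1)` where `cos θ = ⟨v₁, u⟩`, and
`Λ ≥ v₁ᵀ M v₁ ≥ Λ − 2ε`. -/
theorem top_eigenvector_similarity (n : ℕ) (S M Γ : Matrix (Fin n) (Fin n) ℝ)
    (hS : S.PosSemidef) (lam1 γ γ₀ ε Λ : ℝ) (hlam1 : 0 < lam1)
    (v₁ u : EuclideanSpace ℝ (Fin n)) (hv₁ : ‖v₁‖ = 1)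
    (hv₁eig : Matrix.toEuclideanLin S v₁ = lam1 • v₁)
    (hgap : ∀ w : EuclideanSpace ℝ (Fin n), (inner ℝ v₁ w : ℝ) = 0 →
      (inner ℝ w (Matrix.toEuclideanLin S w) : ℝ) ≤ (lam1 / 2) * ‖w‖ ^ 2)
    (hM : M = γ • S + Γ) (hγ : γ₀ ≤ γ) (hγ₀ : 0 < γ₀)
    (hΓ : ∀ w : EuclideanSpace ℝ (Fin n), ‖Matrix.toEuclideanLin Γ w‖ ≤ ε * ‖w‖)
    (hu : ‖u‖ = 1) (hueig : Matrix.toEuclideanLin M u = Λ • u)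
    (hΛmax : ∀ w : EuclideanSpace ℝ (Fin n),
      (inner ℝ w (Matrix.toEuclideanLin M w) : ℝ) ≤ Λ * ‖w‖ ^ 2) :
    1 - (inner ℝ v₁ u : ℝ) ^ 2 ≤ 4 * ε / (γ₀ * lam1) ∧
      (inner ℝ v₁ (Matrix.toEuclideanLin M v₁) : ℝ) ≤ Λ ∧
      Λ - 2 * ε ≤ (inner ℝ v₁ (Matrix.toEuclideanLin M v₁) : ℝ) := by
  have hSsymm := Matrix.isSymmetric_toEuclideanLin_iff.mpr hS.isHermitian
  have hMlin : Matrix.toEuclideanLin M = γ • Matrix.toEuclideanLin S + Matrix.toEuclideanLin Γ := by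
    rw [hM, map_add, map_smul]
  have hγ0 : 0 ≤ γ := hγ₀.le.trans hγ
  have hΛ : ⟪u, Matrix.toEuclideanLin M u⟫ = Λ := by
    rw [hueig, real_inner_smul_right, real_inner_self_eq_norm_sq, hu, one_pow, mul_one]
  have hv₁M : ⟪v₁, Matrix.toEuclideanLin M v₁⟫ ≤ Λ := by simpa [hv₁] using hΛmax v₁
  have hupper := hSsymm.inner_smul_add_map_self_le hv₁ hv₁eig hgap hγ0 hΓ hu
  have hlower := le_inner_smul_add_map_self_of_eigenvector (γ := γ) hv₁ hv₁eig hΓ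
  rw [← hMlin, hΛ] at hupper
  rw [← hMlin] at hlower
  have hsin : 0 ≤ 1 - ⟪v₁, u⟫ ^ 2 := sub_nonneg.mpr <| (sq_le_one_iff_abs_le_one _).mpr <| by
    simpa [hv₁, hu] using abs_real_inner_le_norm v₁ u
  have hsin_le : γ * lam1 * (1 - ⟪v₁, u⟫ ^ 2) ≤ 4 * ε := by linarith
  refine ⟨?_, hv₁M, by linarith [mul_nonneg (mul_nonneg hγ0 hlam1.le) hsin]⟩
  rw [le_div_iff₀ (by positivity)]
  linarith [mul_le_mul_of_nonneg_right hγ (mul_nonneg hlam1.le hsin)]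
end

section
/- Let M ∈ ℝ^{n×n} be symmetric PSD with orthonormal eigenvectors v₁,…,vₙ and eigenvalues λ₁,…,λₙ, all satisfying λᵢ < 1/η for i ≥ 2 (η > 0). Let R'(0) ⊥ v₁ and R'(t+1) = (I − ηM(I − v₁v₁ᵀ)) R'(t). Suppose additionally λᵢ > 0 for i in the support of R'(0). Then for all t ≥ 1, R'(t) ⊥ v₁, R'(t)ᵀvᵢ = (1−ηλᵢ)ᵗ R'(0)ᵀvᵢ, and if R'(0) = −(I − v₁v₁ᵀ)Y then R'(t)ᵀ(R'(t) + Y) = Σ_{i≥2} (R'(t)ᵀvᵢ)² (1 − (1−ηλᵢ)^{−t}) ≤ 0. -/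
/-!
Since `M` is symmetric, its eigenvector `vᵢ` sees the update only through `λᵢ`:
`⟪vᵢ, R'(t+1)⟫ = ⟪vᵢ, R'(t)⟫ - η λᵢ ⟪vᵢ, R'(t) - ⟪v₁, R'(t)⟫ v₁⟫`. For `v₁` the right-hand
side collapses to `⟪v₁, R'(t)⟫`, and for `i ≥ 2` it is `(1 - ηλᵢ) ⟪vᵢ, R'(t)⟫`. Writing
`cᵢ = ⟪vᵢ, R'(0)⟫ = -⟪vᵢ, Y⟫` and `aᵢ = (1 - ηλᵢ)ᵗ ∈ (0, 1]`, Parseval gives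
`⟪R'(t), R'(t) + Y⟫ = ∑_{i ≥ 2} aᵢcᵢ (aᵢcᵢ - cᵢ) = ∑_{i ≥ 2} (aᵢcᵢ)² (1 - aᵢ⁻¹) ≤ 0`.
-/

open scoped RealInnerProductSpace

theorem one_sub_inv_pow_nonpos {a : ℝ} (ha₀ : 0 < a) (ha₁ : a ≤ 1) (t : ℕ) :
    1 - (a ^ t)⁻¹ ≤ 0 :=
  sub_nonpos.mpr ((one_le_inv₀ (pow_pos ha₀ t)).mpr (pow_le_one₀ ha₀.le ha₁))

section

variable {E : Type*} [NormedAddCommGroup E] [InnerProductSpace ℝ E]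

theorem LinearMap.IsSymmetric.inner_apply_of_apply_eq_smul {T : E →ₗ[ℝ] E}
    (hT : T.IsSymmetric) {w : E} {μ : ℝ} (hw : T w = μ • w) (x : E) :
    ⟪w, T x⟫ = μ * ⟪w, x⟫ := by
  rw [← hT, hw, real_inner_smul_left]

theorem OrthonormalBasis.inner_eq_sum_erase {ι : Type*} [Fintype ι] [DecidableEq ι]
    (b : OrthonormalBasis ι ℝ E) {i₀ : ι} {x : E} (hx : ⟪x, b i₀⟫ = 0) (y : E) :
    ⟪x, y⟫ = ∑ i ∈ Finset.univ.erase i₀, ⟪x, b i⟫ * ⟪b i, y⟫ := by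
  rw [← b.sum_inner_mul_inner, ← Finset.add_sum_erase _ _ (Finset.mem_univ i₀), hx,
    zero_mul, zero_add]

namespace ProjectedIteration

variable {T : E →ₗ[ℝ] E} {η : ℝ} {u : E} {R : ℕ → E}
  (hT : T.IsSymmetric) (hrec : ∀ t, R (t + 1) = R t - η • T (R t - ⟪u, R t⟫ • u))
include hT hrec

theorem inner_succ {w : E} {μ : ℝ} (hw : T w = μ • w) (t : ℕ) :
    ⟪w, R (t + 1)⟫ = ⟪w, R t⟫ - η * (μ * (⟪w, R t⟫ - ⟪u, R t⟫ * ⟪w, u⟫)) := by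
  rw [hrec, inner_sub_right, real_inner_smul_right, hT.inner_apply_of_apply_eq_smul hw,
    inner_sub_right, real_inner_smul_right]

theorem inner_eq_inner_zero {μ : ℝ} (hu : ‖u‖ = 1) (hTu : T u = μ • u) (t : ℕ) :
    ⟪u, R t⟫ = ⟪u, R 0⟫ := by
  induction t with
  | zero => rfl
  | succ t ih =>
    rw [inner_succ hT hrec hTu, real_inner_self_eq_norm_sq, hu, ih]
    ring

theorem inner_eq_pow_mul {w : E} {μ : ℝ} (hw : T w = μ • w) (hwu : ⟪w, u⟫ = 0) (t : ℕ) :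
    ⟪w, R t⟫ = (1 - η * μ) ^ t * ⟪w, R 0⟫ := by
  induction t with
  | zero => simp
  | succ t ih =>
    rw [inner_succ hT hrec hw, hwu, ih]
    ring

end ProjectedIteration

end

theorem auxiliary_projected_residual_general (n : ℕ) [NeZero n]
    (M : Matrix (Fin n) (Fin n) ℝ) (hM : M.PosSemidef)
    (η : ℝ) (hη : 0 < η)
    (v : OrthonormalBasis (Fin n) ℝ (EuclideanSpace ℝ (Fin n)))
    (lam : Fin n → ℝ) (hlam0 : ∀ i, 0 ≤ lam i)
    (heig : ∀ i, Matrix.toEuclideanLin M (v i) = lam i • v i)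
    (hsm : ∀ i, i ≠ 0 → lam i < 1 / η)
    (R' : ℕ → EuclideanSpace ℝ (Fin n))
    (h0 : (inner ℝ (v 0) (R' 0) : ℝ) = 0)
    (hrec : ∀ t, R' (t + 1)
      = R' t - η • Matrix.toEuclideanLin M (R' t - (inner ℝ (v 0) (R' t) : ℝ) • v 0))
    (Y : EuclideanSpace ℝ (Fin n)) :
    (∀ t, 1 ≤ t → (inner ℝ (v 0) (R' t) : ℝ) = 0) ∧
    (∀ t, ∀ i : Fin n, i ≠ 0 →
      (inner ℝ (R' t) (v i) : ℝ) = (1 - η * lam i) ^ t * (inner ℝ (R' 0) (v i) : ℝ)) ∧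
    (R' 0 = -(Y - (inner ℝ (v 0) Y : ℝ) • v 0) →
      ∀ t, ((inner ℝ (R' t) (R' t + Y) : ℝ)
          = ∑ i ∈ Finset.univ.erase (0 : Fin n),
              (inner ℝ (R' t) (v i) : ℝ) ^ 2 * (1 - ((1 - η * lam i) ^ t)⁻¹)) ∧
        (inner ℝ (R' t) (R' t + Y) : ℝ) ≤ 0) := by
  have hT := Matrix.isSymmetric_toEuclideanLin_iff.mpr hM.1
  have horth : ∀ i, i ≠ 0 → ⟪v i, v 0⟫ = 0 := fun i hi => v.orthonormal.2 hi
  have hfirst t : ⟪v 0, R' t⟫ = 0 :=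
    (ProjectedIteration.inner_eq_inner_zero hT hrec (v.orthonormal.1 0) (heig 0) t).trans h0
  have hcoord t i (hi : i ≠ 0) : ⟪R' t, v i⟫ = (1 - η * lam i) ^ t * ⟪R' 0, v i⟫ := by
    simpa only [real_inner_comm (v i)] using
      ProjectedIteration.inner_eq_pow_mul hT hrec (heig i) (horth i hi) t
  have hfactor i (hi : i ≠ 0) : 0 < 1 - η * lam i ∧ 1 - η * lam i ≤ 1 := by
    have := (lt_div_iff₀' hη).mp (hsm i hi)
    constructor <;> nlinarith [hlam0 i]
  refine ⟨fun t _ => hfirst t, hcoord, fun hR0 t => ?_⟩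
  have hY i (hi : i ≠ 0) : ⟪v i, Y⟫ = -⟪R' 0, v i⟫ := by
    rw [real_inner_comm Y, hR0, inner_neg_left, inner_sub_left, real_inner_smul_left,
      real_inner_comm (v i) (v 0), horth i hi]
    ring
  have hsum : ⟪R' t, R' t + Y⟫ = ∑ i ∈ Finset.univ.erase (0 : Fin n),
      ⟪R' t, v i⟫ ^ 2 * (1 - ((1 - η * lam i) ^ t)⁻¹) := by
    rw [v.inner_eq_sum_erase (by rw [real_inner_comm]; exact hfirst t)]
    refine Finset.sum_congr rfl fun i hi => ?_
    have hi := Finset.ne_of_mem_erase hi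
    have ha := (pow_pos (hfactor i hi).1 t).ne'
    rw [inner_add_right, real_inner_comm (R' t), hY i hi, hcoord t i hi]
    field_simp
    ring
  refine ⟨hsum, hsum ▸ Finset.sum_nonpos fun i hi => ?_⟩
  have hi := Finset.ne_of_mem_erase hi
  exact mul_nonpos_of_nonneg_of_nonpos (sq_nonneg _)
    (one_sub_inv_pow_nonpos (hfactor i hi).1 (hfactor i hi).2 t)

/-- The auxiliary projected-residual sequence `R'(t)` with fixed eigenvectors stays
orthogonal to `v₁`, contracts per eigendirection, and satisfies
`R'(t)ᵀ(R'(t) + Y) ≤ 0` if `R'(0) = −(I − v₁v₁ᵀ)Y`. -/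
theorem auxiliary_projected_residual (n : ℕ) [NeZero n]
    (M : Matrix (Fin n) (Fin n) ℝ) (hM : M.PosSemidef)
    (η : ℝ) (hη : 0 < η)
    (v : OrthonormalBasis (Fin n) ℝ (EuclideanSpace ℝ (Fin n)))
    (lam : Fin n → ℝ) (hlam0 : ∀ i, 0 ≤ lam i)
    (heig : ∀ i, Matrix.toEuclideanLin M (v i) = lam i • v i)
    (hsm : ∀ i, i ≠ 0 → lam i < 1 / η)
    (R' : ℕ → EuclideanSpace ℝ (Fin n))
    (h0 : (inner ℝ (v 0) (R' 0) : ℝ) = 0)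
    (hrec : ∀ t, R' (t + 1)
      = R' t - η • Matrix.toEuclideanLin M (R' t - (inner ℝ (v 0) (R' t) : ℝ) • v 0))
    (hsupp : ∀ i, (inner ℝ (v i) (R' 0) : ℝ) ≠ 0 → 0 < lam i)
    (Y : EuclideanSpace ℝ (Fin n)) :
    (∀ t, 1 ≤ t → (inner ℝ (v 0) (R' t) : ℝ) = 0) ∧
    (∀ t, ∀ i : Fin n, i ≠ 0 →
      (inner ℝ (R' t) (v i) : ℝ) = (1 - η * lam i) ^ t * (inner ℝ (R' 0) (v i) : ℝ)) ∧
    (R' 0 = -(Y - (inner ℝ (v 0) Y : ℝ) • v 0) →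
      ∀ t, ((inner ℝ (R' t) (R' t + Y) : ℝ)
          = ∑ i ∈ Finset.univ.erase (0 : Fin n),
              (inner ℝ (R' t) (v i) : ℝ) ^ 2 * (1 - ((1 - η * lam i) ^ t)⁻¹)) ∧
        (inner ℝ (R' t) (R' t + Y) : ℝ) ≤ 0) :=
  auxiliary_projected_residual_general n M hM η hη v lam hlam0 heig hsm R' h0 hrec Y
end
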